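/- arXiv:1210.4634 — 6 statements merged into one kernel-verified Lean document; each statement's English description precedes it below -/
import Mathlib

section
/- For any mixed graph G = (V, E, A), any positive integer k, and any arc a ∈ A, we have χ_G(k) + χ_{G_a}(k) = χ_{G−a}(k) + χ_{G/a}(k), where G_a is G with the arc a reversed, G − a is G with a deleted, and G/a is G with a contracted. -/
/-- A mixed graph on vertex set `V`: `E` are the undirected edges (a pair `{u,v}`
may be recorded as `E u v` or `E v u`), `A` are the arcs (directed edges). -/
structure MixedGraph (V : Type*) where
  E : V → V → Prop
  A : V → V → Prop

/-- A weak proper coloring: distinct colors along edges, weakly increasing along arcs. -/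
def MixedGraph.IsWeakColoring {V : Type*} (G : MixedGraph V) {k : ℕ} (c : V → Fin k) : Prop :=
  (∀ u v, G.E u v → c u ≠ c v) ∧ (∀ u v, G.A u v → c u ≤ c v)

/-- The weak chromatic counting function: the number of weak proper `k`-colorings. -/
noncomputable def MixedGraph.weakChi {V : Type*} (G : MixedGraph V) (k : ℕ) : ℕ :=
  Nat.card {c : V → Fin k // G.IsWeakColoring c}

/-- `O` is an orientation of the mixed graph `G`: it contains all arcs, orients every
undirected edge in exactly one of the two directions, and contains nothing else. -/
def MixedGraph.IsOrientation {V : Type*} (G : MixedGraph V) (O : V → V → Prop) : Prop :=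
  (∀ u v, G.A u v → O u v) ∧
  (∀ u v, G.E u v → (O u v ↔ ¬ O v u)) ∧
  (∀ u v, O u v → G.A u v ∨ G.E u v ∨ G.E v u)

/-- A relation is acyclic if it admits no directed cycle. -/
def IsAcyclicRel {V : Type*} (O : V → V → Prop) : Prop :=
  ∀ v, ¬ Relation.TransGen O v v

/-- A mixed graph is acyclic if all of its orientations are acyclic. -/
def MixedGraph.Acyclic {V : Type*} (G : MixedGraph V) : Prop :=
  ∀ O : V → V → Prop, G.IsOrientation O → IsAcyclicRel O

/-- A coloring `c` is intercompatible with an orientation `O` of `G` if for every `u → v`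
in `O` we have `c u ≤ c v` when `uv` is an undirected edge of `G`, and `c u < c v`
when `u → v` is an arc of `G`. -/
def MixedGraph.Intercompatible {V : Type*} (G : MixedGraph V) (O : V → V → Prop)
    {k : ℕ} (c : V → Fin k) : Prop :=
  ∀ u v, O u v → ((G.E u v ∨ G.E v u) → c u ≤ c v) ∧ (G.A u v → c u < c v)

/-- Deletion–contraction for an arc `a → b` of a mixed graph:
`χ_G(k) + χ_{G_a}(k) = χ_{G-a}(k) + χ_{G/a}(k)`, where `G_a` reverses the arc,
`G - a` deletes it, and colorings of the contraction `G/a` are encoded as colorings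
of `G - a` taking the same value on `a` and `b`. -/
theorem stmt1 {V : Type*} [Fintype V] (G : MixedGraph V) (a b : V) (hab : G.A a b)
    (k : ℕ) (hk : 0 < k) :
    G.weakChi k +
      (MixedGraph.mk G.E
        (fun u v => (G.A u v ∧ ¬(u = a ∧ v = b)) ∨ (u = b ∧ v = a))).weakChi k =
    (MixedGraph.mk G.E (fun u v => G.A u v ∧ ¬(u = a ∧ v = b))).weakChi k +
      Nat.card {c : V → Fin k // c a = c b ∧
        (MixedGraph.mk G.E (fun u v => G.A u v ∧ ¬(u = a ∧ v = b))).IsWeakColoring c} := by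
  classical
  set Gd : MixedGraph V := MixedGraph.mk G.E (fun u v => G.A u v ∧ ¬(u = a ∧ v = b)) with hGd
  set Gr : MixedGraph V := MixedGraph.mk G.E
    (fun u v => (G.A u v ∧ ¬(u = a ∧ v = b)) ∨ (u = b ∧ v = a)) with hGr
  have h1 : ∀ c : V → Fin k, G.IsWeakColoring c ↔ (Gd.IsWeakColoring c ∧ c a ≤ c b) := by
    intro c
    constructor
    · rintro ⟨hE, hA⟩
      exact ⟨⟨hE, fun u v huv => hA u v huv.1⟩, hA a b hab⟩
    · rintro ⟨⟨hE, hA⟩, hle⟩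
      refine ⟨hE, fun u v huv => ?_⟩
      by_cases h : u = a ∧ v = b
      · obtain ⟨rfl, rfl⟩ := h; exact hle
      · exact hA u v ⟨huv, h⟩
  have h2 : ∀ c : V → Fin k, Gr.IsWeakColoring c ↔ (Gd.IsWeakColoring c ∧ c b ≤ c a) := by
    intro c
    constructor
    · rintro ⟨hE, hA⟩
      exact ⟨⟨hE, fun u v huv => hA u v (Or.inl huv)⟩, hA b a (Or.inr ⟨rfl, rfl⟩)⟩
    · rintro ⟨⟨hE, hA⟩, hle⟩
      refine ⟨hE, fun u v huv => ?_⟩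
      rcases huv with h | ⟨rfl, rfl⟩
      · exact hA u v h
      · exact hle
  have hc1 : G.weakChi k = Nat.card {c : V → Fin k // Gd.IsWeakColoring c ∧ c a ≤ c b} :=
    Nat.card_congr (Equiv.subtypeEquivRight h1)
  have hc2 : Gr.weakChi k = Nat.card {c : V → Fin k // Gd.IsWeakColoring c ∧ c b ≤ c a} :=
    Nat.card_congr (Equiv.subtypeEquivRight h2)
  rw [hc1, hc2]
  -- now an inclusion-exclusion on sets
  have key : ∀ s t : Set (V → Fin k),
      (s ∪ t).ncard + (s ∩ t).ncard = s.ncard + t.ncard := by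
    intro s t
    exact Set.ncard_union_add_ncard_inter s t (Set.toFinite s) (Set.toFinite t)
  have hs : {c : V → Fin k | Gd.IsWeakColoring c ∧ c a ≤ c b} ∪
      {c : V → Fin k | Gd.IsWeakColoring c ∧ c b ≤ c a} =
      {c : V → Fin k | Gd.IsWeakColoring c} := by
    ext c
    simp only [Set.mem_union, Set.mem_setOf_eq]
    constructor
    · rintro (⟨h, _⟩ | ⟨h, _⟩) <;> exact h
    · intro h
      rcases le_total (c a) (c b) with hle | hle
      · exact Or.inl ⟨h, hle⟩
      · exact Or.inr ⟨h, hle⟩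
  have hi : {c : V → Fin k | Gd.IsWeakColoring c ∧ c a ≤ c b} ∩
      {c : V → Fin k | Gd.IsWeakColoring c ∧ c b ≤ c a} =
      {c : V → Fin k | c a = c b ∧ Gd.IsWeakColoring c} := by
    ext c
    simp only [Set.mem_inter_iff, Set.mem_setOf_eq]
    constructor
    · rintro ⟨⟨h, h1⟩, ⟨_, h2⟩⟩
      exact ⟨le_antisymm h1 h2, h⟩
    · rintro ⟨heq, h⟩
      exact ⟨⟨h, heq.le⟩, ⟨h, heq.ge⟩⟩
  have := key {c : V → Fin k | Gd.IsWeakColoring c ∧ c a ≤ c b}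
    {c : V → Fin k | Gd.IsWeakColoring c ∧ c b ≤ c a}
  rw [hs, hi] at this
  exact this.symm
end

section
/- Let G be a mixed graph and S a strongly connected directed subgraph of G (a subgraph using only arcs of G that is strongly connected). Then for every positive integer k, χ_G(k) = χ_{G/S}(k), where G/S is obtained from G by removing all edges and arcs of S and identifying all vertices of S to a single vertex. -/
/-- Contracting a strongly connected directed subgraph `S` (vertex set `VS`, arcs `AS`)
of a mixed graph `G` does not change the weak chromatic polynomial. Colorings of `G/S`
are encoded as colorings of `G` minus the arcs of `S` that are constant on `VS`. -/
theorem stmt4 {V : Type*} [Fintype V] (G : MixedGraph V) (VS : Set V) (AS : V → V → Prop)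
    (hsub : ∀ u v, AS u v → G.A u v) (hverts : ∀ u v, AS u v → u ∈ VS ∧ v ∈ VS)
    (hne : VS.Nonempty)
    (hconn : ∀ u ∈ VS, ∀ v ∈ VS, Relation.ReflTransGen AS u v)
    (k : ℕ) (hk : 0 < k) :
    G.weakChi k =
      Nat.card {c : V → Fin k // (∀ u ∈ VS, ∀ v ∈ VS, c u = c v) ∧
        (MixedGraph.mk G.E (fun u v => G.A u v ∧ ¬ AS u v)).IsWeakColoring c} := by
  unfold MixedGraph.weakChi
  apply Nat.card_congr
  apply Equiv.subtypeEquivRight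
  intro c
  constructor
  · rintro ⟨hE, hA⟩
    have hconst : ∀ u ∈ VS, ∀ v ∈ VS, c u = c v := by
      have mono : ∀ u v, Relation.ReflTransGen AS u v → c u ≤ c v := by
        intro u v h
        induction h with
        | refl => exact le_rfl
        | tail _ hstep ih => exact ih.trans (hA _ _ (hsub _ _ hstep))
      intro u hu v hv
      exact le_antisymm (mono u v (hconn u hu v hv)) (mono v u (hconn v hv u hu))
    exact ⟨hconst, hE, fun u v h => hA u v h.1⟩
  · rintro ⟨hconst, hE, hA⟩
    refine ⟨hE, fun u v h => ?_⟩
    by_cases hAS : AS u v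
    · exact le_of_eq (hconst u (hverts u v hAS).1 v (hverts u v hAS).2)
    · exact hA u v ⟨h, hAS⟩
end

section
/- There is a bijection between the weak proper k-colorings of a mixed graph G and the weak proper k-colorings of G/S, where S is a strongly connected directed subgraph of G: every weak proper k-coloring of G is constant on the vertices of S, and this constant value gives the color of the contracted vertex. -/
/-- Every weak proper coloring of `G` is constant on a strongly connected directed
subgraph `S = (VS, AS)`, and the map sending a coloring of `G` to the corresponding
coloring of `G/S` (encoded as a coloring constant on `VS` of `G` minus the arcs of `S`,
so that the common value on `VS` is the color of the contracted vertex) is a bijection. -/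
theorem stmt5 {V : Type*} [Fintype V] (G : MixedGraph V) (VS : Set V) (AS : V → V → Prop)
    (hsub : ∀ u v, AS u v → G.A u v) (hverts : ∀ u v, AS u v → u ∈ VS ∧ v ∈ VS)
    (hne : VS.Nonempty)
    (hconn : ∀ u ∈ VS, ∀ v ∈ VS, Relation.ReflTransGen AS u v)
    (k : ℕ) (hk : 0 < k) :
    (∀ c : V → Fin k, G.IsWeakColoring c → ∀ u ∈ VS, ∀ v ∈ VS, c u = c v) ∧
    ∃ e : {c : V → Fin k // G.IsWeakColoring c} ≃
        {c : V → Fin k // (∀ u ∈ VS, ∀ v ∈ VS, c u = c v) ∧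
          (MixedGraph.mk G.E (fun u v => G.A u v ∧ ¬ AS u v)).IsWeakColoring c},
      ∀ c, ((e c : {c : V → Fin k // _}) : V → Fin k) = (c : V → Fin k) := by
  have hconst : ∀ c : V → Fin k, G.IsWeakColoring c → ∀ u ∈ VS, ∀ v ∈ VS, c u = c v := by
    intro c hc u hu v hv
    have mono : ∀ x y, Relation.ReflTransGen AS x y → c x ≤ c y := by
      intro x y h
      induction h with
      | refl => exact le_refl _
      | tail _ hxy ih => exact le_trans ih (hc.2 _ _ (hsub _ _ hxy))
    exact le_antisymm (mono u v (hconn u hu v hv)) (mono v u (hconn v hv u hu))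
  refine ⟨hconst, ?_⟩
  have hiff : ∀ c : V → Fin k, G.IsWeakColoring c ↔
      ((∀ u ∈ VS, ∀ v ∈ VS, c u = c v) ∧
        (MixedGraph.mk G.E (fun u v => G.A u v ∧ ¬ AS u v)).IsWeakColoring c) := by
    intro c
    constructor
    · intro hc
      exact ⟨hconst c hc, hc.1, fun u v h => hc.2 u v h.1⟩
    · rintro ⟨hcst, hE, hA⟩
      refine ⟨hE, fun u v h => ?_⟩
      by_cases hAS : AS u v
      · exact le_of_eq (hcst u (hverts u v hAS).1 v (hverts u v hAS).2)
      · exact hA u v ⟨h, hAS⟩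
  exact ⟨Equiv.subtypeEquivRight hiff, fun c => rfl⟩
end

section
/- Let P be a finite poset with n elements and ω : P → {1,...,n} a bijection. Define Ω_{P,ω}(k) as the number of maps x : P → {1,...,k} such that x_u ≤ x_v whenever u ⪯ v and ω(u) < ω(v), and x_u < x_v whenever u ⪯ v and ω(u) > ω(v). Then Ω_{P,ω}(k) agrees with a polynomial in k for all positive integers k. -/
open Finset Function Polynomial

section OrderInvariant

variable {P : Type*} {S : ∀ k : ℕ, (P → Fin k) → Prop}

def IsOrderEmbeddingInvariant (S : ∀ k : ℕ, (P → Fin k) → Prop) : Prop :=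
  ∀ ⦃j k : ℕ⦄ (f : Fin j ↪o Fin k) (y : P → Fin j), S k (f ∘ y) ↔ S j y

noncomputable def IsOrderEmbeddingInvariant.surjectiveEquivRangeEq
    (hS : IsOrderEmbeddingInvariant S) {k : ℕ} (s : Finset (Fin k)) :
    {y : P → Fin #s // S _ y ∧ Surjective y} ≃
      {x : P → Fin k // S k x ∧ Set.range x = s} :=
  let f := s.orderEmbOfFin rfl
  Equiv.ofBijective
    (fun y => ⟨f ∘ y, (hS f y).2 y.2.1, by
      rw [Set.range_comp, y.2.2.range_eq, Set.image_univ, range_orderEmbOfFin]⟩)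
    ⟨fun y y' h => Subtype.ext <| f.injective.comp_left (congrArg Subtype.val h), by
      rintro ⟨x, hSx, hx⟩
      obtain ⟨y, rfl⟩ := (Set.range_subset_range_iff_exists_comp (f := x) (g := f)).1
        (hx.le.trans (range_orderEmbOfFin s rfl).ge)
      have hy : f '' Set.range y = f '' Set.univ := by
        rw [← Set.range_comp, hx, Set.image_univ, range_orderEmbOfFin]
      have hsurj : Surjective y := Set.range_eq_univ.1 (Set.image_injective.2 f.injective hy)
      exact ⟨⟨y, (hS f y).1 hSx, hsurj⟩, rfl⟩⟩

variable [Fintype P]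

theorem IsOrderEmbeddingInvariant.card_eq_sum_card_surjective (hS : IsOrderEmbeddingInvariant S)
    (k : ℕ) :
    Nat.card {x : P → Fin k // S k x} =
      ∑ s : Finset (Fin k), Nat.card {y : P → Fin #s // S _ y ∧ Surjective y} := by
  classical
  let byRange : {x : P → Fin k // S k x} ≃
      Σ s : Finset (Fin k), {x : P → Fin k // S k x ∧ Set.range x = s} :=
    { toFun x := ⟨(Set.range x.1).toFinset, x.1, x.2, (Set.coe_toFinset _).symm⟩
      invFun x := ⟨x.2.1, x.2.2.1⟩
      left_inv _ := rfl
      right_inv := fun ⟨_, _, _, hx⟩ => Sigma.subtype_ext (by simp [hx]) rfl }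
  rw [Nat.card_congr byRange, Nat.card_sigma]
  exact sum_congr rfl fun s _ => (Nat.card_congr (hS.surjectiveEquivRangeEq s)).symm

theorem card_surjective_eq_zero_of_card_lt {j : ℕ} (hj : Fintype.card P < j) :
    Nat.card {y : P → Fin j // S j y ∧ Surjective y} = 0 := by
  have : IsEmpty {y : P → Fin j // S j y ∧ Surjective y} :=
    ⟨fun y => hj.not_ge <| by simpa using Fintype.card_le_of_surjective _ y.2.2⟩
  exact Nat.card_of_isEmpty

theorem IsOrderEmbeddingInvariant.card_eq_sum_choose_mul (hS : IsOrderEmbeddingInvariant S)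
    (k : ℕ) :
    Nat.card {x : P → Fin k // S k x} = ∑ j ∈ range (Fintype.card P + 1),
      k.choose j * Nat.card {y : P → Fin j // S j y ∧ Surjective y} := by
  set e : ℕ → ℕ := fun j => Nat.card {y : P → Fin j // S j y ∧ Surjective y}
  have hsubsets : ∑ s : Finset (Fin k), e #s = ∑ j ∈ range (k + 1), k.choose j * e j := by
    simpa [← powerset_univ] using sum_powerset_apply_card e (x := (univ : Finset (Fin k)))
  rw [hS.card_eq_sum_card_surjective, hsubsets,
    ← eventually_constant_sum (N := k + 1) (n := Fintype.card P + k + 1)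
      (fun j hj => by rw [Nat.choose_eq_zero_of_lt hj, zero_mul]) (by omega),
    eventually_constant_sum (N := Fintype.card P + 1)
      (fun j hj => mul_eq_zero_of_right _ (card_surjective_eq_zero_of_card_lt hj)) (by omega)]

theorem IsOrderEmbeddingInvariant.exists_polynomial_eval_eq_card
    (hS : IsOrderEmbeddingInvariant S) :
    ∃ p : ℚ[X], ∀ k : ℕ, p.eval (k : ℚ) = Nat.card {x : P → Fin k // S k x} := by
  set e : ℕ → ℕ := fun j => Nat.card {y : P → Fin j // S j y ∧ Surjective y}
  refine ⟨∑ j ∈ range (Fintype.card P + 1),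
    C ((e j : ℚ) / j.factorial) * descPochhammer ℚ j, fun k => ?_⟩
  rw [hS.card_eq_sum_choose_mul, eval_finsetSum, Nat.cast_sum]
  refine sum_congr rfl fun j _ => ?_
  rw [eval_mul, eval_C, Nat.cast_mul, Nat.cast_choose_eq_descPochhammer_div]
  ring

end OrderInvariant

/-- The order polynomial: for a finite poset `P` with a bijective labeling `ω`,
the number of maps `x : P → {1,…,k}` with `x u ≤ x v` whenever `u ⪯ v` and `ω u < ω v`,
and `x u < x v` whenever `u ⪯ v` and `ω u > ω v`, agrees with a polynomial in `k`. -/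
theorem stmt9 {P : Type*} [Fintype P] [PartialOrder P]
    (ω : P ≃ Fin (Fintype.card P)) :
    ∃ p : Polynomial ℚ, ∀ k : ℕ, 0 < k →
      p.eval (k : ℚ) =
        Nat.card {x : P → Fin k // ∀ u v : P, u ≤ v →
          (ω u < ω v → x u ≤ x v) ∧ (ω v < ω u → x u < x v)} := by
  have hΩ : IsOrderEmbeddingInvariant fun k (x : P → Fin k) => ∀ u v : P, u ≤ v →
      (ω u < ω v → x u ≤ x v) ∧ (ω v < ω u → x u < x v) := fun j k f y => by
    simp only [comp_apply, f.le_iff_le, f.lt_iff_lt]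
  obtain ⟨p, hp⟩ := hΩ.exists_polynomial_eval_eq_card
  exact ⟨p, fun k _ => hp k⟩
end

section
/- Let P be a finite poset with n elements, ω : P → {1,...,n} a bijection, and ω̄ the complementary labeling defined by ω̄(v) = n + 1 − ω(v). Then for every positive integer k, Ω_{P,ω}(−k) = (−1)^{|P|} Ω_{P,ω̄}(k), where Ω_{P,ω}(−k) denotes the evaluation at −k of the polynomial agreeing with Ω_{P,ω} on positive integers. -/
open Finset Function Polynomial

section Ascents

variable {α : Type*} [LinearOrder α]

def ascentCount : {n : ℕ} → (Fin n → α) → ℕ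
  | 0, _ => 0
  | m + 1, g => #{i : Fin m | g i.castSucc < g i.succ}

lemma ascentCount_add_ascentCount_comp {β : Type*} [LinearOrder β] {n : ℕ} {g : Fin n → α}
    (hg : Injective g) {φ : α → β} (hφ : StrictAnti φ) :
    ascentCount g + ascentCount (φ ∘ g) = n - 1 := by
  rcases n with _ | m
  · rfl
  have hdual : ∀ i : Fin m, φ (g i.castSucc) < φ (g i.succ) ↔ ¬ g i.castSucc < g i.succ :=
    fun i => by
      rw [hφ.lt_iff_gt, not_lt, lt_iff_le_and_ne]
      exact and_iff_left (hg.ne (Fin.castSucc_lt_succ (i := i)).ne')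
  simp only [ascentCount, comp_apply, hdual, card_filter_add_card_filter_not, card_univ,
    Fintype.card_fin, Nat.add_sub_cancel]

variable {m : ℕ} (g : Fin (m + 1) → α)

def ascentsBefore (j : Fin (m + 1)) : ℕ :=
  #{i : Fin m | i.castSucc < j ∧ g i.castSucc < g i.succ}

lemma ascentsBefore_zero : ascentsBefore g 0 = 0 := by
  simp [ascentsBefore]

lemma ascentsBefore_succ (i : Fin m) :
    ascentsBefore g i.succ =
      ascentsBefore g i.castSucc + if g i.castSucc < g i.succ then 1 else 0 := by
  have hIic : univ.filter (· ≤ i) = insert i (univ.filter (· < i)) := by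
    ext i'; simp [le_iff_lt_or_eq, or_comm]
  simp only [ascentsBefore, ← filter_filter, Fin.castSucc_lt_succ_iff,
    Fin.castSucc_lt_castSucc_iff]
  rw [hIic, filter_insert]
  split_ifs <;> simp

lemma ascentsBefore_le_ascentCount (j : Fin (m + 1)) : ascentsBefore g j ≤ ascentCount g :=
  card_le_card (monotone_filter_right _ fun _ _ h => h.2)

lemma ascentsBefore_last : ascentsBefore g (Fin.last m) = ascentCount g := by
  simp [ascentsBefore, ascentCount, Fin.castSucc_lt_last]

lemma toLex_lt_toLex_iff_add_ite_le {k : ℕ} {a b : Fin k} {c d : α} :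
    toLex (a, c) < toLex (b, d) ↔ (a : ℕ) + (if c < d then 0 else 1) ≤ b := by
  rw [Prod.Lex.toLex_lt_toLex, Fin.lt_def, Fin.ext_iff]
  split_ifs with h
  · simp only [h, and_true, add_zero]
    omega
  · simp [h]

lemma monotone_sub_ascentsBefore {M : ℕ} {z : Fin (m + 1) → Fin M} (hz : StrictMono z) :
    Monotone fun i => (z i : ℤ) - ascentsBefore g i := by
  refine Fin.monotone_iff_le_succ.2 fun i => ?_
  have := Fin.lt_def.1 (hz (Fin.castSucc_lt_succ (i := i)))
  rw [ascentsBefore_succ]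
  split_ifs <;> push_cast <;> omega

end Ascents

section Count

variable {α : Type*} [LinearOrder α]

lemma card_strictMono_fin (n M : ℕ) :
    Nat.card {z : Fin n → Fin M // StrictMono z} = M.choose n := by
  classical
  have e : {z : Fin n → Fin M // StrictMono z} ≃ {s : Finset (Fin M) // #s = n} :=
    { toFun z := ⟨univ.image z.1, by rw [card_image_of_injective _ z.2.injective, card_fin]⟩
      invFun s := ⟨s.1.orderEmbOfFin s.2, (s.1.orderEmbOfFin s.2).strictMono⟩
      left_inv z := Subtype.ext
        (orderEmbOfFin_unique _ (fun i => mem_image_of_mem _ (mem_univ i)) z.2).symm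
      right_inv s := Subtype.ext <| coe_injective <| by
        rw [coe_image, coe_univ, Set.image_univ, range_orderEmbOfFin] }
  rw [Nat.card_congr e, Nat.card_eq_fintype_card, Fintype.card_finset_len, Fintype.card_fin]

variable {m k : ℕ} (g : Fin (m + 1) → α)

lemma ascentsBefore_le_of_strictMono {z : Fin (m + 1) → Fin (k + ascentCount g)}
    (hz : StrictMono z) (i : Fin (m + 1)) : ascentsBefore g i ≤ z i := by
  have := monotone_sub_ascentsBefore g hz (Fin.zero_le i)
  simp only [ascentsBefore_zero] at this
  omega

lemma sub_ascentsBefore_lt_of_strictMono {z : Fin (m + 1) → Fin (k + ascentCount g)}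
    (hz : StrictMono z) (i : Fin (m + 1)) : z i - ascentsBefore g i < k := by
  have hmono := monotone_sub_ascentsBefore g hz (Fin.le_last i)
  have hlast := (z (Fin.last m)).2
  have := ascentsBefore_le_of_strictMono g hz i
  simp only [ascentsBefore_last] at hmono
  omega

def lexStrictMonoEquiv :
    {y : Fin (m + 1) → Fin k // StrictMono fun i => toLex (y i, g i)} ≃
      {z : Fin (m + 1) → Fin (k + ascentCount g) // StrictMono z} where
  toFun y := ⟨fun i => ⟨y.1 i + ascentsBefore g i, by
      have := ascentsBefore_le_ascentCount g i; have := (y.1 i).2; omega⟩, by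
    refine Fin.strictMono_iff_lt_succ.2 fun i => Fin.lt_def.2 ?_
    have := toLex_lt_toLex_iff_add_ite_le.1 (y.2 (Fin.castSucc_lt_succ (i := i)))
    simp only [ascentsBefore_succ]
    split_ifs at this ⊢ <;> omega⟩
  invFun z :=
    ⟨fun i => ⟨z.1 i - ascentsBefore g i, sub_ascentsBefore_lt_of_strictMono g z.2 i⟩, by
      refine Fin.strictMono_iff_lt_succ.2 fun i => toLex_lt_toLex_iff_add_ite_le.2 ?_
      have := Fin.lt_def.1 (z.2 (Fin.castSucc_lt_succ (i := i)))
      have := ascentsBefore_le_of_strictMono g z.2 i.castSucc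
      simp only [ascentsBefore_succ]
      split_ifs <;> omega⟩
  left_inv y := by ext i; simp
  right_inv z := by
    ext i
    have := ascentsBefore_le_of_strictMono g z.2 i
    simp only
    omega

end Count

lemma card_lexStrictMono {α : Type*} [LinearOrder α] {n : ℕ} (g : Fin n → α) (k : ℕ) :
    Nat.card {y : Fin n → Fin k // StrictMono fun i => toLex (y i, g i)} =
      (k + ascentCount g).choose n := by
  rcases n with _ | m
  · simp [Nat.card_eq_fintype_card, Subsingleton.strictMono, ascentCount]
  · rw [Nat.card_congr (lexStrictMonoEquiv g), card_strictMono_fin]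

lemma exists_equiv_fin_strictMono_comp {P γ : Type*} [Fintype P] [LinearOrder γ] {G : P → γ}
    (hG : Injective G) : ∃ w : Fin (Fintype.card P) ≃ P, StrictMono (G ∘ w) := by
  classical
  let e := monoEquivOfFin (Set.range G) (Set.card_range_of_injective hG)
  refine ⟨e.toEquiv.trans (Equiv.ofInjective G hG).symm, fun i j hij => ?_⟩
  simpa [Equiv.apply_ofInjective_symm] using e.strictMono hij

section POmegaPartition

variable {P α β : Type*} [PartialOrder P] [LinearOrder α] [LinearOrder β]

abbrev IsPOmegaPartition (ω : P → α) (x : P → β) : Prop :=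
  ∀ u v : P, u ≤ v → (ω u < ω v → x u ≤ x v) ∧ (ω v < ω u → x u < x v)

lemma isPOmegaPartition_iff_strictMono {ω : P → α} (hω : Injective ω) {x : P → β} :
    IsPOmegaPartition ω x ↔ StrictMono fun v => toLex (x v, ω v) := by
  refine ⟨fun hx u v huv => ?_, fun hx u v huv => ?_⟩
  · obtain ⟨hle, hlt⟩ := hx u v huv.le
    rw [Prod.Lex.toLex_lt_toLex]
    rcases (hω.ne huv.ne).lt_or_gt with h | h
    · exact (hle h).lt_or_eq.imp_right (⟨·, h⟩)
    · exact .inl (hlt h)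
  · rcases huv.lt_or_eq with huv | rfl
    · have := Prod.Lex.toLex_lt_toLex.1 (hx huv)
      refine ⟨fun _ => ?_, fun h => this.resolve_right fun h' => h'.2.not_gt h⟩
      rcases this with h | h
      exacts [h.le, h.1.le]
    · exact ⟨fun h => absurd h (lt_irrefl _), fun h => absurd h (lt_irrefl _)⟩

variable [Fintype P]

variable (P) in
abbrev LinearExtensions : Type _ := {w : Fin (Fintype.card P) ≃ P // Monotone w.symm}

noncomputable instance : Fintype (LinearExtensions P) := Fintype.ofFinite _

def ofLinearExtension (ω : P → α)
    (s : Σ w : LinearExtensions P, {y : Fin (Fintype.card P) → β //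
      StrictMono fun i => toLex (y i, ω (w.1 i))}) :
    {x : P → β // StrictMono fun v => toLex (x v, ω v)} :=
  ⟨s.2.1 ∘ s.1.1.symm, by
    have h := s.2.2.comp (s.1.2.strictMono_of_injective s.1.1.symm.injective)
    simpa [Function.comp_def] using h⟩

lemma ofLinearExtension_bijective {ω : P → α} (hω : Injective ω) :
    Bijective (ofLinearExtension (β := β) ω) := by
  constructor
  · rintro ⟨w₁, y₁, hy₁⟩ ⟨w₂, y₂, hy₂⟩ h
    have hy : y₁ ∘ w₁.1.symm = y₂ ∘ w₂.1.symm := congrArg Subtype.val h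
    let G : P → Lex (β × α) := fun v => toLex (y₁ (w₁.1.symm v), ω v)
    have hG : Injective G := fun u v h => hω (congrArg Prod.snd (toLex.injective h))
    have hG₁ : StrictMono (G ∘ w₁.1) := by simpa [G, Function.comp_def] using hy₁
    have hG₂ : StrictMono (G ∘ w₂.1) := by
      have h₂ (i) : y₁ (w₁.1.symm (w₂.1 i)) = y₂ i := by
        simpa using congrFun hy (w₂.1 i)
      simpa [G, Function.comp_def, h₂] using hy₂
    -- both are increasing enumerations of the range of `G`
    have hw : G ∘ w₁.1 = G ∘ w₂.1 :=
      (hG₁.range_inj hG₂).1 (by rw [EquivLike.range_comp, EquivLike.range_comp])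
    obtain rfl : w₁ = w₂ := Subtype.ext (Equiv.ext fun i => hG (congrFun hw i))
    refine Sigma.subtype_ext rfl (funext fun i => ?_)
    simpa using congrFun hy (w₁.1 i)
  · rintro ⟨x, hx⟩
    obtain ⟨w, hw⟩ := exists_equiv_fin_strictMono_comp (G := fun v => toLex (x v, ω v))
      fun u v h => hω (congrArg Prod.snd (toLex.injective h))
    refine ⟨⟨⟨w, fun u v huv => ?_⟩, x ∘ w, hw⟩, ?_⟩
    · exact hw.le_iff_le.1 (by simpa using hx.monotone huv)
    · ext v; simp [ofLinearExtension]

lemma card_isPOmegaPartition {ω : P → α} (hω : Injective ω) (k : ℕ) :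
    Nat.card {x : P → Fin k // IsPOmegaPartition ω x} =
      ∑ w : LinearExtensions P, (k + ascentCount (ω ∘ w.1)).choose (Fintype.card P) := by
  rw [Nat.card_congr (Equiv.subtypeEquivRight fun x => isPOmegaPartition_iff_strictMono hω),
    ← Nat.card_eq_of_bijective _ (ofLinearExtension_bijective hω), Nat.card_sigma]
  exact sum_congr rfl fun w _ => card_lexStrictMono (ω ∘ w.1) k

end POmegaPartition

section BinomialPoly

variable (K : Type*) [Field K]

noncomputable def binomialPoly (n a : ℕ) : K[X] :=
  C (n.factorial : K)⁻¹ * (descPochhammer K n).comp (X + C (a : K))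

variable {K} [CharZero K]

lemma binomialPoly_eval_natCast (n a k : ℕ) :
    (binomialPoly K n a).eval (k : K) = ((k + a).choose n : K) := by
  rw [binomialPoly, eval_mul, eval_C, eval_comp, eval_add, eval_X, eval_C, ← Nat.cast_add,
    descPochhammer_eval_eq_descFactorial, Nat.descFactorial_eq_factorial_mul_choose, Nat.cast_mul,
    inv_mul_cancel_left₀ (by exact_mod_cast n.factorial_ne_zero)]

lemma binomialPoly_eval_neg {n a b : ℕ} (hab : a + b = n - 1) (r : K) :
    (binomialPoly K n a).eval (-r) = (-1) ^ n * (binomialPoly K n b).eval r := by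
  rcases n with _ | n
  · simp [binomialPoly]
  have hshift : -r + a - (n + 1 : ℕ) + 1 = -(r + b) := by
    rw [show (a : K) = n - b by rw [eq_sub_iff_add_eq, ← Nat.cast_add, hab]; rfl]
    push_cast; ring
  simp only [binomialPoly, eval_mul, eval_C, eval_comp, eval_add, eval_X,
    descPochhammer_eval_eq_ascPochhammer, hshift, ascPochhammer_eval_neg_eq_descPochhammer]
  ring

end BinomialPoly

lemma Polynomial.eq_of_eval_natCast_eq {R : Type*} [CommRing R] [IsDomain R] [CharZero R]
    {p q : R[X]} (h : ∀ k : ℕ, 0 < k → p.eval (k : R) = q.eval (k : R)) : p = q :=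
  eq_of_infinite_eval_eq p q <| Set.infinite_of_injective_forall_mem
    (f := fun k : ℕ => ((k + 1 : ℕ) : R)) (fun a b h => by simpa using h)
    fun k => h (k + 1) k.succ_pos

theorem stmt10_general {P : Type*} [Fintype P] [PartialOrder P]
    (ω : P ≃ Fin (Fintype.card P)) (p : Polynomial ℚ)
    (hp : ∀ k : ℕ, 0 < k →
      p.eval (k : ℚ) =
        Nat.card {x : P → Fin k // ∀ u v : P, u ≤ v →
          (ω u < ω v → x u ≤ x v) ∧ (ω v < ω u → x u < x v)})
    (k : ℕ) :
    p.eval (-(k : ℚ)) =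
      (-1) ^ Fintype.card P *
        Nat.card {x : P → Fin k // ∀ u v : P, u ≤ v →
          ((ω u).rev < (ω v).rev → x u ≤ x v) ∧ ((ω v).rev < (ω u).rev → x u < x v)} := by
  have hrev : Injective fun u => (ω u).rev := Fin.rev_injective.comp ω.injective
  have hp_eq : p = ∑ w : LinearExtensions P,
      binomialPoly ℚ (Fintype.card P) (ascentCount (ω ∘ w.1)) := by
    refine eq_of_eval_natCast_eq fun m hm => ?_
    rw [hp m hm, eval_finsetSum, card_isPOmegaPartition ω.injective m]
    simp [binomialPoly_eval_natCast]
  rw [card_isPOmegaPartition hrev k, hp_eq, eval_finsetSum, Nat.cast_sum, mul_sum]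
  refine sum_congr rfl fun w _ => ?_
  rw [binomialPoly_eval_neg (ascentCount_add_ascentCount_comp (ω.injective.comp w.1.injective)
    Fin.rev_strictAnti), binomialPoly_eval_natCast]
  rfl

/-- Stanley's reciprocity for order polynomials:
`Ω_{P,ω}(-k) = (-1)^{|P|} Ω_{P,ω̄}(k)`, where `ω̄ = Fin.rev ∘ ω` is the complementary
labeling `ω̄(v) = n + 1 - ω(v)`. -/
theorem stmt10 {P : Type*} [Fintype P] [PartialOrder P]
    (ω : P ≃ Fin (Fintype.card P)) (p : Polynomial ℚ)
    (hp : ∀ k : ℕ, 0 < k →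
      p.eval (k : ℚ) =
        Nat.card {x : P → Fin k // ∀ u v : P, u ≤ v →
          (ω u < ω v → x u ≤ x v) ∧ (ω v < ω u → x u < x v)})
    (k : ℕ) (hk : 0 < k) :
    p.eval (-(k : ℚ)) =
      (-1) ^ Fintype.card P *
        Nat.card {x : P → Fin k // ∀ u v : P, u ≤ v →
          ((ω u).rev < (ω v).rev → x u ≤ x v) ∧ ((ω v).rev < (ω u).rev → x u < x v)} :=
  stmt10_general ω p hp k
end

section
/- For any mixed graph G = (V, E, A), the counting function χ_G(k) (the number of weak proper k-colorings of G) agrees with a polynomial in k of degree at most |V| for all positive integers k. -/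
/-!
Both conditions of a weak coloring are preserved and reflected by order embeddings of the sets
of colors. Hence a weak `k`-coloring whose image `S` has `m` elements is the same thing as a
surjective weak `m`-coloring followed by the increasing enumeration of `S`, and
`χ_G(k) = ∑ₘ (k choose m) sₘ`, where `sₘ` counts the surjective weak `m`-colorings. Since
`sₘ = 0` for `m > |V|` and `k ↦ k choose m` is a polynomial of degree `m`, the claim follows.
-/

open Finset Polynomial

theorem Polynomial.exists_natDegree_le_eval_eq_sum_choose_mul {K : Type*} [Field K] [CharZero K]
    (a : ℕ → K) (n : ℕ) :
    ∃ p : K[X], p.natDegree ≤ n ∧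
      ∀ k : ℕ, p.eval (k : K) = ∑ m ∈ range (n + 1), (k.choose m : K) * a m := by
  refine ⟨∑ m ∈ range (n + 1), C (a m / m.factorial) * descPochhammer K m, ?_, fun k => ?_⟩
  · refine natDegree_sum_le_of_forall_le _ _ fun m hm => ?_
    calc (C (a m / m.factorial) * descPochhammer K m).natDegree
        ≤ (descPochhammer K m).natDegree := natDegree_C_mul_le _ _
      _ = m := descPochhammer_natDegree K m
      _ ≤ n := Nat.lt_succ_iff.mp (mem_range.mp hm)
  · rw [eval_finsetSum]
    refine sum_congr rfl fun m _ => ?_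
    rw [eval_mul, eval_C, Nat.cast_choose_eq_descPochhammer_div]
    ring

namespace MixedGraph

variable {V : Type*} (G : MixedGraph V)

theorem isWeakColoring_comp_orderEmbedding {m k : ℕ} (f : Fin m ↪o Fin k) (c : V → Fin m) :
    G.IsWeakColoring (f ∘ c) ↔ G.IsWeakColoring c := by
  simp only [IsWeakColoring, Function.comp_apply, f.injective.ne_iff, f.le_iff_le]

noncomputable def surjWeakChi (m : ℕ) : ℕ :=
  Nat.card {c : V → Fin m // G.IsWeakColoring c ∧ Function.Surjective c}

theorem surjWeakChi_eq_zero [Fintype V] {m : ℕ} (hm : Fintype.card V < m) :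
    G.surjWeakChi m = 0 := by
  rw [surjWeakChi, Nat.card_eq_zero]
  left
  refine ⟨fun ⟨c, _, hc⟩ => ?_⟩
  exact (Fintype.card_fin m ▸ Fintype.card_le_of_surjective c hc).not_gt hm

noncomputable def surjWeakColoringEquivImageEq [Fintype V] {k : ℕ} (S : Finset (Fin k)) :
    {c : V → Fin S.card // G.IsWeakColoring c ∧ Function.Surjective c} ≃
      {c : V → Fin k // G.IsWeakColoring c ∧ univ.image c = S} :=
  let ι := S.orderEmbOfFin rfl
  Equiv.ofBijective
    (fun c => ⟨ι ∘ c.1, (G.isWeakColoring_comp_orderEmbedding ι c.1).mpr c.2.1,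
      coe_injective (by
        rw [coe_image, coe_univ, Set.image_univ, c.2.2.range_comp, range_orderEmbOfFin])⟩)
    (by
      constructor
      · intro c d hcd
        exact Subtype.ext (ι.injective.comp_left (congrArg Subtype.val hcd))
      · rintro ⟨c, hc, himage⟩
        have hrange (v : V) : ∃ j, ι j = c v := by
          rw [← Set.mem_range, range_orderEmbOfFin, ← himage]
          simp
        choose g hg using hrange
        have hcomp : ι ∘ g = c := funext hg
        refine ⟨⟨g, (G.isWeakColoring_comp_orderEmbedding ι g).mp (hcomp ▸ hc), fun j => ?_⟩,
          Subtype.ext hcomp⟩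
        have hj : ι j ∈ univ.image c := by
          rw [himage]
          exact S.orderEmbOfFin_mem rfl j
        obtain ⟨v, -, hv⟩ := mem_image.mp hj
        exact ⟨v, ι.injective (by rw [hg, hv])⟩)

theorem weakChi_eq_sum_choose_mul_surjWeakChi [Fintype V] (k : ℕ) :
    G.weakChi k = ∑ m ∈ range (k + 1), k.choose m * G.surjWeakChi m := by
  have byImage : {c : V → Fin k // G.IsWeakColoring c} ≃
      Σ S : Finset (Fin k), {c : V → Fin k // G.IsWeakColoring c ∧ univ.image c = S} :=
    (Equiv.sigmaFiberEquiv fun c : {c // G.IsWeakColoring c} => univ.image c.1).symm.trans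
      (Equiv.sigmaCongrRight fun S =>
        Equiv.subtypeSubtypeEquivSubtypeInter _ fun c => univ.image c = S)
  calc G.weakChi k = ∑ S : Finset (Fin k), G.surjWeakChi S.card := by
        rw [weakChi, Nat.card_congr byImage, Nat.card_sigma]
        exact sum_congr rfl fun S _ => (Nat.card_congr (G.surjWeakColoringEquivImageEq S)).symm
    _ = ∑ m ∈ range (k + 1), k.choose m * G.surjWeakChi m := by
        rw [← powerset_univ, sum_powerset_apply_card, card_univ, Fintype.card_fin]
        simp only [smul_eq_mul]

theorem weakChi_eq_sum_range_card_choose_mul [Fintype V] (k : ℕ) :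
    G.weakChi k = ∑ m ∈ range (Fintype.card V + 1), k.choose m * G.surjWeakChi m := by
  have extend (n : ℕ) (hn : n ≤ max k (Fintype.card V))
      (hvanish : ∀ m, n < m → k.choose m * G.surjWeakChi m = 0) :
      ∑ m ∈ range (n + 1), k.choose m * G.surjWeakChi m =
        ∑ m ∈ range (max k (Fintype.card V) + 1), k.choose m * G.surjWeakChi m :=
    sum_subset (range_subset_range.mpr (by omega)) fun m _ hm =>
      hvanish m (by simpa using hm)
  rw [weakChi_eq_sum_choose_mul_surjWeakChi,
    extend k (le_max_left _ _) fun m hm => by simp [Nat.choose_eq_zero_of_lt hm],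
    extend (Fintype.card V) (le_max_right _ _) fun m hm => by simp [G.surjWeakChi_eq_zero hm]]

end MixedGraph

/-- The weak chromatic counting function of a mixed graph agrees, for all positive
integers `k`, with a polynomial of degree at most `|V|`. -/
theorem stmt18 {V : Type*} [Fintype V] (G : MixedGraph V) :
    ∃ p : Polynomial ℚ, p.natDegree ≤ Fintype.card V ∧
      ∀ k : ℕ, 0 < k → p.eval (k : ℚ) = G.weakChi k := by
  obtain ⟨p, hdeg, hp⟩ :=
    exists_natDegree_le_eval_eq_sum_choose_mul (fun m => (G.surjWeakChi m : ℚ)) (Fintype.card V)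
  refine ⟨p, hdeg, fun k _ => ?_⟩
  rw [hp, G.weakChi_eq_sum_range_card_choose_mul k]
  push_cast
  rfl
end
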